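/- Let P, Q ∈ k[X] over an algebraically closed field k of characteristic zero, and let α be a root of P' of multiplicity p and β a root of Q' of multiplicity q. Suppose f, g are nonconstant elements of a function field K over k with P(f) = Q(g), and let p₀ ∈ C be a point with v_{p₀}(f − α) > 0 and v_{p₀}(g − β) > 0. Then (p+1)·v_{p₀}(f − α) = (q+1)·v_{p₀}(g − β). -/

import Mathlib

open scoped BigOperators

/-- Abstract data of the function field `K` of a smooth projective curve `C`
over an algebraically closed field `k`: the set of closed points, normalized
valuations `v p`, the genus, and the order `dv p f = v_p (d f / d t_p)` of the
local derivative with respect to a uniformizer at `p`. -/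
structure CurveFunctionField (k : Type) [Field k] where
  K : Type
  [fieldK : Field K]
  [algK : Algebra k K]
  Point : Type
  v : Point → K → ℤ
  genus : ℕ
  dv : Point → K → ℤ
  v_zero : ∀ p, v p 0 = 0
  v_mul : ∀ p (f g : K), f ≠ 0 → g ≠ 0 → v p (f * g) = v p f + v p g
  v_add : ∀ p (f g : K), f ≠ 0 → g ≠ 0 → f + g ≠ 0 →
    min (v p f) (v p g) ≤ v p (f + g)
  v_const : ∀ p (c : k), c ≠ 0 → v p (algebraMap k K c) = 0
  v_finite : ∀ f : K, f ≠ 0 → (Function.support fun p => v p f).Finite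
  v_normalized : ∀ p : Point, ∃ f : K, f ≠ 0 ∧ v p f = 1
  dv_pole : ∀ p (f : K), v p f < 0 → dv p f = v p f - 1
  dv_reg : ∀ p (f : K), 0 ≤ v p f → 0 ≤ dv p f

namespace CurveFunctionField

variable {k : Type} [Field k] (F : CurveFunctionField k)

instance : Field F.K := F.fieldK
instance : Algebra k F.K := F.algK

/-- `f ∈ K` is nonconstant if it is not in the image of `k`. -/
def Nonconstant (f : F.K) : Prop := f ∉ Set.range (algebraMap k F.K)

/-- The height `h(f) = Σ_p −min{0, v_p(f)}` of `f ∈ K`. -/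
noncomputable def ht (f : F.K) : ℤ := ∑ᶠ p : F.Point, -(min 0 (F.v p f))

/-- The height `h(f, g) = Σ_p −min{v_p(f), v_p(g)}` of `[f : g] ∈ ℙ¹(K)`. -/
noncomputable def ht2 (f g : F.K) : ℤ :=
  ∑ᶠ p : F.Point, -(min (F.v p f) (F.v p g))

end CurveFunctionField

open Polynomial CurveFunctionField

/-!
Put `A = P − P(α)`. Since `A(α) = 0` and `A' = P'`, in characteristic zero `α` is a root of `A`
of multiplicity `p + 1`, so `A = (X − α)^(p+1) R` with `R(α) ≠ 0`. As `f` is close to `α` at `p₀`,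
each factor `f − c` of `R(f)` with `c ≠ α` is a unit there, hence
`v_{p₀}(P(f) − P(α)) = (p + 1) v_{p₀}(f − α)`, and likewise for `Q`, `g`, `β`. Both
`P(f) − P(α)` and `P(f) − Q(β)` then vanish at `p₀`, so the constant `P(α) − Q(β)` does too,
forcing `P(α) = Q(β)`.
-/

theorem Polynomial.sub_C_ne_zero {R : Type*} [Ring R] {P : R[X]} (hP : 0 < P.natDegree) (c : R) :
    P - C c ≠ 0 :=
  ne_zero_of_natDegree_gt (n := 0) (by rwa [natDegree_sub_C])

theorem Polynomial.rootMultiplicity_sub_C_eval {R : Type*} [CommRing R] [IsDomain R]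
    [CharZero R] {P : R[X]} (hP : 0 < P.natDegree) (a : R) :
    (P - C (P.eval a)).rootMultiplicity a = P.derivative.rootMultiplicity a + 1 := by
  have hroot : (P - C (P.eval a)).IsRoot a := by simp
  have hpos := (rootMultiplicity_pos (sub_C_ne_zero hP _)).2 hroot
  have hder := derivative_rootMultiplicity_of_root hroot
  rw [derivative_sub, derivative_C, sub_zero] at hder
  omega

namespace CurveFunctionField

variable {k : Type} [Field k] (F : CurveFunctionField k) (p : F.Point)

lemma ne_zero_of_v_pos {x : F.K} (hx : 0 < F.v p x) : x ≠ 0 := by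
  rintro rfl
  exact hx.ne' (F.v_zero p)

lemma v_one : F.v p 1 = 0 := by
  have := F.v_mul p 1 1 one_ne_zero one_ne_zero
  rw [mul_one] at this
  omega

lemma v_neg {x : F.K} (hx : x ≠ 0) : F.v p (-x) = F.v p x := by
  have hsq := F.v_mul p (-1) (-1) (by simp) (by simp)
  rw [neg_one_mul, neg_neg, F.v_one] at hsq
  rw [neg_eq_neg_one_mul, F.v_mul p _ _ (by simp) hx]
  omega

lemma v_pow {x : F.K} (hx : x ≠ 0) (n : ℕ) : F.v p (x ^ n) = n * F.v p x := by
  induction n with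
  | zero => simpa using F.v_one p
  | succ n ih =>
    rw [pow_succ, F.v_mul p _ _ (pow_ne_zero _ hx) hx, ih]
    push_cast
    ring

lemma add_ne_zero_of_v_lt {a b : F.K} (ha : a ≠ 0) (h : F.v p a < F.v p b) : a + b ≠ 0 := by
  intro hab
  rw [← neg_eq_of_add_eq_zero_right hab, F.v_neg p ha] at h
  exact h.false

lemma v_add_of_v_lt {a b : F.K} (ha : a ≠ 0) (hb : b ≠ 0) (h : F.v p a < F.v p b) :
    F.v p (a + b) = F.v p a := by
  have hab := F.add_ne_zero_of_v_lt p ha h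
  have hle := F.v_add p a b ha hb hab
  have hge := F.v_add p (a + b) (-b) hab (neg_ne_zero.2 hb) (by simpa using ha)
  rw [add_neg_cancel_right, F.v_neg p hb] at hge
  omega

/-- The units of the local ring at `p`. -/
def valUnits : Submonoid F.K where
  carrier := {x | x ≠ 0 ∧ F.v p x = 0}
  one_mem' := ⟨one_ne_zero, F.v_one p⟩
  mul_mem' := fun {x y} ⟨hx, hvx⟩ ⟨hy, hvy⟩ =>
    ⟨mul_ne_zero hx hy, by rw [F.v_mul p x y hx hy, hvx, hvy, add_zero]⟩

lemma algebraMap_mem_valUnits {c : k} (hc : c ≠ 0) : algebraMap k F.K c ∈ F.valUnits p :=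
  ⟨(_root_.map_ne_zero _).2 hc, F.v_const p c hc⟩

lemma sub_algebraMap_mem_valUnits {f : F.K} {α c : k} (hfα : 0 < F.v p (f - algebraMap k F.K α))
    (hc : c ≠ α) : f - algebraMap k F.K c ∈ F.valUnits p := by
  obtain ⟨hne, hv⟩ := F.algebraMap_mem_valUnits p (sub_ne_zero.2 hc.symm)
  have hsum : algebraMap k F.K (α - c) + (f - algebraMap k F.K α) = f - algebraMap k F.K c := by
    rw [map_sub]
    ring
  rw [← hsum]
  refine ⟨F.add_ne_zero_of_v_lt p hne (hv ▸ hfα), ?_⟩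
  rw [F.v_add_of_v_lt p hne (F.ne_zero_of_v_pos p hfα) (hv ▸ hfα), hv]

lemma aeval_mem_valUnits [IsAlgClosed k] {f : F.K} {α : k}
    (hfα : 0 < F.v p (f - algebraMap k F.K α)) {R : k[X]} (hR : R.eval α ≠ 0) :
    aeval f R ∈ F.valUnits p := by
  have hR0 : R ≠ 0 := fun h => hR (by simp [h])
  rw [(IsAlgClosed.splits R).eq_prod_roots, map_mul, aeval_C, map_multiset_prod]
  refine Submonoid.mul_mem _ (F.algebraMap_mem_valUnits p (leadingCoeff_ne_zero.2 hR0))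
    (Submonoid.multiset_prod_mem _ _ fun x hx => ?_)
  obtain ⟨c, hc, rfl⟩ := Multiset.mem_map.1 (Multiset.map_map _ _ _ ▸ hx)
  simp only [Function.comp_apply, map_sub, aeval_X, aeval_C]
  exact F.sub_algebraMap_mem_valUnits p hfα fun h => hR (h ▸ isRoot_of_mem_roots hc)

lemma v_aeval_sub_eval [IsAlgClosed k] [CharZero k] {P : k[X]} (hP : 0 < P.natDegree)
    {f : F.K} {α : k} (hfα : 0 < F.v p (f - algebraMap k F.K α)) :
    F.v p (aeval f P - algebraMap k F.K (P.eval α)) =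
      ((P.derivative.rootMultiplicity α : ℤ) + 1) * F.v p (f - algebraMap k F.K α) := by
  set A := P - C (P.eval α) with hA
  obtain ⟨hRne, hRv⟩ := F.aeval_mem_valUnits p hfα
    (eval_divByMonic_pow_rootMultiplicity_ne_zero α (sub_C_ne_zero hP (P.eval α)))
  have hfac : aeval f P - algebraMap k F.K (P.eval α) =
      (f - algebraMap k F.K α) ^ A.rootMultiplicity α *
        aeval f (A /ₘ (X - C α) ^ A.rootMultiplicity α) := by
    have hAf : aeval f P - algebraMap k F.K (P.eval α) = aeval f A := by
      rw [hA, map_sub, aeval_C]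
    rw [hAf]
    conv_lhs => rw [← pow_mul_divByMonic_rootMultiplicity_eq A α]
    rw [map_mul, map_pow, map_sub, aeval_X, aeval_C]
  have hfα0 := F.ne_zero_of_v_pos p hfα
  rw [hfac, F.v_mul p _ _ (pow_ne_zero _ hfα0) hRne, F.v_pow p hfα0, hRv,
    rootMultiplicity_sub_C_eval hP]
  push_cast
  ring

lemma eq_of_v_sub_algebraMap_pos {x : F.K} {a b : k}
    (ha : 0 < F.v p (x - algebraMap k F.K a)) (hb : 0 < F.v p (x - algebraMap k F.K b)) :
    a = b := by
  by_contra hab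
  obtain ⟨hne, hv⟩ := F.algebraMap_mem_valUnits p (sub_ne_zero.2 (Ne.symm hab))
  have hsum : (x - algebraMap k F.K a) + -(x - algebraMap k F.K b) = algebraMap k F.K (b - a) := by
    rw [map_sub]
    ring
  have hb0 := F.ne_zero_of_v_pos p hb
  have hmin := F.v_add p _ _ (F.ne_zero_of_v_pos p ha) (neg_ne_zero.2 hb0) (hsum ▸ hne)
  rw [hsum, hv, F.v_neg p hb0] at hmin
  omega

end CurveFunctionField

theorem local_multiplicity_relation_general {k : Type} [Field k] [IsAlgClosed k] [CharZero k]
    (F : CurveFunctionField k) (P Q : Polynomial k)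
    (hP : 0 < P.natDegree) (hQ : 0 < Q.natDegree)
    (α β : k) (p q : ℕ)
    (hp : P.derivative.rootMultiplicity α = p)
    (hq : Q.derivative.rootMultiplicity β = q)
    (f g : F.K)
    (heq : Polynomial.aeval f P = Polynomial.aeval g Q)
    (p₀ : F.Point)
    (hfα : 0 < F.v p₀ (f - algebraMap k F.K α))
    (hgβ : 0 < F.v p₀ (g - algebraMap k F.K β)) :
    ((p : ℤ) + 1) * F.v p₀ (f - algebraMap k F.K α) =
      ((q : ℤ) + 1) * F.v p₀ (g - algebraMap k F.K β) := by
  have hvP := F.v_aeval_sub_eval p₀ hP hfα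
  have hvQ := F.v_aeval_sub_eval p₀ hQ hgβ
  have hPQ : P.eval α = Q.eval β := F.eq_of_v_sub_algebraMap_pos p₀
    (hvP ▸ mul_pos (by positivity) hfα) (heq ▸ hvQ ▸ mul_pos (by positivity) hgβ)
  rw [← hp, ← hq, ← hvP, ← hvQ, heq, hPQ]

/-- If `α` is a root of `P'` of multiplicity `p`, `β` a root of `Q'` of
multiplicity `q`, `P(f) = Q(g)`, and at the point `p₀` both `f − α` and
`g − β` vanish, then `(p+1)·v_{p₀}(f−α) = (q+1)·v_{p₀}(g−β)`. -/
theorem local_multiplicity_relation {k : Type} [Field k] [IsAlgClosed k] [CharZero k]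
    (F : CurveFunctionField k) (P Q : Polynomial k)
    (hP : 0 < P.natDegree) (hQ : 0 < Q.natDegree)
    (α β : k) (p q : ℕ)
    (hα : P.derivative.IsRoot α) (hβ : Q.derivative.IsRoot β)
    (hp : P.derivative.rootMultiplicity α = p)
    (hq : Q.derivative.rootMultiplicity β = q)
    (f g : F.K) (hf : F.Nonconstant f) (hg : F.Nonconstant g)
    (heq : Polynomial.aeval f P = Polynomial.aeval g Q)
    (p₀ : F.Point)
    (hfα : 0 < F.v p₀ (f - algebraMap k F.K α))
    (hgβ : 0 < F.v p₀ (g - algebraMap k F.K β)) :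
    ((p : ℤ) + 1) * F.v p₀ (f - algebraMap k F.K α) =
      ((q : ℤ) + 1) * F.v p₀ (g - algebraMap k F.K β) :=
  local_multiplicity_relation_general F P Q hP hQ α β p q hp hq f g heq p₀ hfα hgβ
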